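/- (Kochen–Specker no-go theorem) Let n = 4, A = Fin 18, and B = Fin 2, and let X be a KS team. Then for every nonempty type C there is no hidden-variable team Y ⊆ (Fin 4 → Fin 18) × (Fin 4 → Fin 2) × C that realizes X and supports both z-independence and parameter independence. -/
import Mathlib


/-- A hidden-variable team: a set of assignments `(a, b, c)` where `a` gives the
measurement values, `b` the outcome values and `c` the hidden-variable value. -/
abbrev HVTeam (n : ℕ) (A B C : Type) := Set ((Fin n → A) × (Fin n → B) × C)

/-- An empirical team: a set of assignments `(a, b)`. -/
abbrev EmpTeam (n : ℕ) (A B : Type) := Set ((Fin n → A) × (Fin n → B))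

/-- A hidden-variable team `Y` realizes an empirical team `X`. -/
def Realizes {n : ℕ} {A B C : Type} (Y : HVTeam n A B C) (X : EmpTeam n A B) : Prop :=
  X = {ab | ∃ c, (ab.1, ab.2, c) ∈ Y}

/-- z-independence: the hidden variable is independent of the measurements. -/
def ZIndependence {n : ℕ} {A B C : Type} (Y : HVTeam n A B C) : Prop :=
  ∀ s ∈ Y, ∀ s' ∈ Y, ∃ s'' ∈ Y, s''.2.2 = s.2.2 ∧ ∀ i, s''.1 i = s'.1 i

/-- Parameter independence. -/
def ParameterIndependence {n : ℕ} {A B C : Type} (Y : HVTeam n A B C) : Prop :=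
  ∀ i : Fin n, ∀ s ∈ Y, ∀ s' ∈ Y, s.1 i = s'.1 i → s.2.2 = s'.2.2 →
    ∃ s'' ∈ Y, (∀ j, s''.1 j = s.1 j) ∧ s''.2.2 = s.2.2 ∧ s''.2.1 i = s'.2.1 i

/-- An empirical team is equivariant if it is closed under the action of the
symmetric group `S₄` permuting the coordinates (simultaneously on measurements
and outcomes), where `(π.v) i = v (π⁻¹ i)`. -/
def Equivariant (X : EmpTeam 4 (Fin 18) (Fin 2)) : Prop :=
  ∀ (a : Fin 4 → Fin 18) (b : Fin 4 → Fin 2) (π : Equiv.Perm (Fin 4)),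
    (∃ s ∈ X, s.1 = a ∧ s.2 = b) ↔
      (∃ s ∈ X, s.1 = (fun i => a (π⁻¹ i)) ∧ s.2 = (fun i => b (π⁻¹ i)))

/-- The nine measurement quadruples of the Kochen–Specker construction. -/
def KS_P : Set (Fin 4 → Fin 18) :=
  {![0, 1, 2, 3], ![0, 4, 5, 6], ![7, 8, 2, 9],
   ![7, 10, 6, 11], ![1, 4, 12, 13], ![8, 10, 13, 14],
   ![15, 16, 3, 9], ![15, 17, 5, 11], ![16, 17, 12, 14]}

/-- The four outcome quadruples of the Kochen–Specker construction. -/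
def KS_Q : Set (Fin 4 → Fin 2) :=
  {![1, 0, 0, 0], ![0, 1, 0, 0], ![0, 0, 1, 0], ![0, 0, 0, 1]}

/-- A KS team. -/
def IsKSTeam (X : EmpTeam 4 (Fin 18) (Fin 2)) : Prop :=
  (∃ f : KS_P → KS_Q, ∀ (a : KS_P) (b : Fin 4 → Fin 2),
      (∃ s ∈ X, s.1 = (a : Fin 4 → Fin 18) ∧ s.2 = b) ↔ (f a : Fin 4 → Fin 2) = b) ∧
  Equivariant X

/-- Kochen–Specker no-go theorem: no KS team is realized by a hidden-variable
team supporting z-independence and parameter independence. -/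
theorem kochen_specker_no_go (X : EmpTeam 4 (Fin 18) (Fin 2)) (hX : IsKSTeam X)
    (C : Type) [Nonempty C] :
    ¬ ∃ Y : HVTeam 4 (Fin 18) (Fin 2) C,
        Realizes Y X ∧ ZIndependence Y ∧ ParameterIndependence Y := by
  rintro ⟨Y, hR, hZ, hPI⟩
  obtain ⟨⟨f, hf⟩, hE⟩ := hX
  have hp1 : (![0, 1, 2, 3] : Fin 4 → Fin 18) ∈ KS_P := by simp [KS_P]
  have hp2 : (![0, 4, 5, 6] : Fin 4 → Fin 18) ∈ KS_P := by simp [KS_P]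
  have hp3 : (![7, 8, 2, 9] : Fin 4 → Fin 18) ∈ KS_P := by simp [KS_P]
  have hp4 : (![7, 10, 6, 11] : Fin 4 → Fin 18) ∈ KS_P := by simp [KS_P]
  have hp5 : (![1, 4, 12, 13] : Fin 4 → Fin 18) ∈ KS_P := by simp [KS_P]
  have hp6 : (![8, 10, 13, 14] : Fin 4 → Fin 18) ∈ KS_P := by simp [KS_P]
  have hp7 : (![15, 16, 3, 9] : Fin 4 → Fin 18) ∈ KS_P := by simp [KS_P]
  have hp8 : (![15, 17, 5, 11] : Fin 4 → Fin 18) ∈ KS_P := by simp [KS_P]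
  have hp9 : (![16, 17, 12, 14] : Fin 4 → Fin 18) ∈ KS_P := by simp [KS_P]
  have hXmem : ∀ a : KS_P, ((a : Fin 4 → Fin 18), (f a : Fin 4 → Fin 2)) ∈ X := by
    intro a
    obtain ⟨s, hs, e1, e2⟩ := (hf a (f a : Fin 4 → Fin 2)).mpr rfl
    rw [← e1, ← e2]; exact hs
  have hfib : ∀ (a : Fin 4 → Fin 18) (ha : a ∈ KS_P) (b : Fin 4 → Fin 2),
      (a, b) ∈ X → b = (f ⟨a, ha⟩ : Fin 4 → Fin 2) := fun a ha b hab =>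
    ((hf ⟨a, ha⟩ b).mp ⟨(a, b), hab, rfl, rfl⟩).symm
  have hXY : ∀ a b, (a, b) ∈ X → ∃ c, (a, b, c) ∈ Y := by
    intro a b hab; rw [hR] at hab; exact hab
  have hYX : ∀ t ∈ Y, (t.1, t.2.1) ∈ X := by
    intro t ht; rw [hR]; exact ⟨t.2.2, ht⟩
  obtain ⟨c₀, hc₀⟩ := hXY _ _ (hXmem ⟨_, hp1⟩)
  have hmove : ∀ a b, (a, b) ∈ X → ∃ t ∈ Y, t.1 = a ∧ t.2.2 = c₀ := by
    intro a b hab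
    obtain ⟨c, hc⟩ := hXY a b hab
    obtain ⟨t, ht, htz, hta⟩ := hZ _ hc₀ _ hc
    exact ⟨t, ht, funext hta, htz⟩
  have key : ∀ (a a' : Fin 4 → Fin 18) (ha : a ∈ KS_P) (ha' : a' ∈ KS_P)
      (i j : Fin 4), a i = a' j →
      (f ⟨a, ha⟩ : Fin 4 → Fin 2) i = (f ⟨a', ha'⟩ : Fin 4 → Fin 2) j := by
    intro a a' ha ha' i j hq
    have hperm : ((fun k => a' ((Equiv.swap i j)⁻¹ k)),
        (fun k => (f ⟨a', ha'⟩ : Fin 4 → Fin 2) ((Equiv.swap i j)⁻¹ k))) ∈ X := by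
      obtain ⟨s, hs, e1, e2⟩ :=
        (hE a' (f ⟨a', ha'⟩ : Fin 4 → Fin 2) (Equiv.swap i j)).mp
          ⟨_, hXmem ⟨a', ha'⟩, rfl, rfl⟩
      rw [← e1, ← e2]; exact hs
    obtain ⟨t, ht, ht1, htz⟩ := hmove _ _ hperm
    obtain ⟨u, hu, hu1, huz⟩ := hmove _ _ (hXmem ⟨a, ha⟩)
    have hti : t.2.1 i = (f ⟨a', ha'⟩ : Fin 4 → Fin 2) j := by
      have hX2 : ((fun k => a' ((Equiv.swap i j)⁻¹ k)), t.2.1) ∈ X := by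
        have h := hYX t ht; rwa [ht1] at h
      obtain ⟨s, hs, e1, e2⟩ :=
        (hE (fun k => a' ((Equiv.swap i j)⁻¹ k)) t.2.1 (Equiv.swap i j)).mp
          ⟨_, hX2, rfl, rfl⟩
      have ea : (fun k => (fun m => a' ((Equiv.swap i j)⁻¹ m)) ((Equiv.swap i j)⁻¹ k)) = a' := by
        funext k; simp [Equiv.swap_inv, Equiv.swap_apply_self]
      rw [ea] at e1
      have hmem2 : (a', fun k => t.2.1 ((Equiv.swap i j)⁻¹ k)) ∈ X := by
        rw [← e1, ← e2]; exact hs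
      have hb' := hfib a' ha' _ hmem2
      have h2 := congrFun hb' j
      simpa [Equiv.swap_inv, Equiv.swap_apply_right] using h2
    have hui : u.1 i = t.1 i := by
      rw [hu1, ht1]
      simpa [Equiv.swap_inv, Equiv.swap_apply_left] using hq
    obtain ⟨w, hw, hw1, hwz, hwi⟩ := hPI i u hu t ht hui (by rw [huz, htz])
    have hwX : (a, w.2.1) ∈ X := by
      have h := hYX w hw
      have e : w.1 = a := by rw [funext hw1, hu1]
      rwa [e] at h
    have hwb := hfib a ha _ hwX
    rw [← hwb, hwi]; exact hti
  have hQ : ∀ (a : Fin 4 → Fin 18) (ha : a ∈ KS_P),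
      ((f ⟨a, ha⟩ : Fin 4 → Fin 2) 0).val + ((f ⟨a, ha⟩ : Fin 4 → Fin 2) 1).val
        + ((f ⟨a, ha⟩ : Fin 4 → Fin 2) 2).val + ((f ⟨a, ha⟩ : Fin 4 → Fin 2) 3).val = 1 := by
    intro a ha
    have hb := (f ⟨a, ha⟩).2
    simp only [KS_Q, Set.mem_insert_iff, Set.mem_singleton_iff] at hb
    rcases hb with h | h | h | h <;> rw [h] <;> decide
  have S1 := hQ _ hp1
  have S2 := hQ _ hp2
  have S3 := hQ _ hp3
  have S4 := hQ _ hp4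
  have S5 := hQ _ hp5
  have S6 := hQ _ hp6
  have S7 := hQ _ hp7
  have S8 := hQ _ hp8
  have S9 := hQ _ hp9
  have E0 := congrArg Fin.val (key _ _ hp1 hp2 0 0 (by decide))
  have E1 := congrArg Fin.val (key _ _ hp1 hp5 1 0 (by decide))
  have E2 := congrArg Fin.val (key _ _ hp1 hp3 2 2 (by decide))
  have E3 := congrArg Fin.val (key _ _ hp1 hp7 3 2 (by decide))
  have E4 := congrArg Fin.val (key _ _ hp2 hp5 1 1 (by decide))
  have E5 := congrArg Fin.val (key _ _ hp2 hp8 2 2 (by decide))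
  have E6 := congrArg Fin.val (key _ _ hp2 hp4 3 2 (by decide))
  have E7 := congrArg Fin.val (key _ _ hp3 hp4 0 0 (by decide))
  have E8 := congrArg Fin.val (key _ _ hp3 hp6 1 0 (by decide))
  have E9 := congrArg Fin.val (key _ _ hp3 hp7 3 3 (by decide))
  have E10 := congrArg Fin.val (key _ _ hp4 hp6 1 1 (by decide))
  have E11 := congrArg Fin.val (key _ _ hp4 hp8 3 3 (by decide))
  have E12 := congrArg Fin.val (key _ _ hp5 hp9 2 2 (by decide))
  have E13 := congrArg Fin.val (key _ _ hp5 hp6 3 2 (by decide))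
  have E14 := congrArg Fin.val (key _ _ hp6 hp9 3 3 (by decide))
  have E15 := congrArg Fin.val (key _ _ hp7 hp8 0 0 (by decide))
  have E16 := congrArg Fin.val (key _ _ hp7 hp9 1 0 (by decide))
  have E17 := congrArg Fin.val (key _ _ hp8 hp9 1 1 (by decide))
  omega
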